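/- Let γ ≥ 0 and define R_a(a,b) := −(a² + b²)·b − γ·a and R_b(a,b) := (a² + b²)·a − γ·b. Let a, b : ℝ² → ℝ be smooth functions of (t,x) satisfying ∂a/∂t = −∂²b/∂x² + R_a(a,b) and ∂b/∂t = ∂²a/∂x² + R_b(a,b) everywhere. Define c := 0, d := 0, pa := 0, pb := 0, qa := ∂b/∂x, qb := −∂a/∂x, zt := 0, zx := 0. Then all the Hamilton–De Donder–Weyl equations of the damped nonlinear Schrödinger two-contact system hold: (i) ∂c/∂t − ∂pa/∂x = −c·∂R_a/∂a(a,b) − d·∂R_b/∂a(a,b); (ii) −∂a/∂t − ∂qa/∂x = −R_a(a,b); (iii) ∂d/∂t − ∂pb/∂x = −c·∂R_a/∂b(a,b) − d·∂R_b/∂b(a,b); (iv) −∂b/∂t − ∂qb/∂x = −R_b(a,b); (v) ∂a/∂x = −qb; (vi) ∂b/∂x = qa; (vii) ∂zt/∂t + ∂zx/∂x = ½(−c·∂a/∂t + a·∂c/∂t − d·∂b/∂t + b·∂d/∂t) + pa·∂a/∂x + pb·∂b/∂x + qa·∂c/∂x + qb·∂d/∂x − h, where h = −pa·qb + pb·qa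 − c·R_a(a,b) − d·R_b(a,b). -/

import Mathlib

/-- Partial derivative with respect to the first variable of a two-argument function. -/
noncomputable def pdt (f : ℝ → ℝ → ℝ) : ℝ → ℝ → ℝ := fun t x => deriv (fun s => f s x) t
/-- Partial derivative with respect to the second variable of a two-argument function. -/
noncomputable def pdx (f : ℝ → ℝ → ℝ) : ℝ → ℝ → ℝ := fun t x => deriv (fun y => f t y) x

/-- The reaction term `R_a` of the real form of the damped nonlinear Schrödinger equation. -/
noncomputable def Ra (γ : ℝ) : ℝ → ℝ → ℝ := fun a b => -(a ^ 2 + b ^ 2) * b - γ * a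
/-- The reaction term `R_b` of the real form of the damped nonlinear Schrödinger equation. -/
noncomputable def Rb (γ : ℝ) : ℝ → ℝ → ℝ := fun a b => (a ^ 2 + b ^ 2) * a - γ * b

/-- every solution of the real form of the damped nonlinear
Schrödinger equation lifts, via the consistent reduction `c = d = pa = pb = 0`,
`qa = bₓ`, `qb = -aₓ`, `zt = zx = 0`, to a solution of the full two-contact
Hamilton--De Donder--Weyl system. -/
theorem damped_NLS_consistent_reduction
    (γ : ℝ) (hγ : 0 ≤ γ)
    (a b : ℝ → ℝ → ℝ)
    (ha : ContDiff ℝ (⊤ : ℕ∞) (Function.uncurry a))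
    (hb : ContDiff ℝ (⊤ : ℕ∞) (Function.uncurry b))
    (hsol1 : ∀ t x, pdt a t x = -pdx (pdx b) t x + Ra γ (a t x) (b t x))
    (hsol2 : ∀ t x, pdt b t x = pdx (pdx a) t x + Rb γ (a t x) (b t x)) :
    let c : ℝ → ℝ → ℝ := fun _ _ => 0
    let d : ℝ → ℝ → ℝ := fun _ _ => 0
    let pa : ℝ → ℝ → ℝ := fun _ _ => 0
    let pb : ℝ → ℝ → ℝ := fun _ _ => 0
    let qa : ℝ → ℝ → ℝ := fun t x => pdx b t x
    let qb : ℝ → ℝ → ℝ := fun t x => -(pdx a t x)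
    let zt : ℝ → ℝ → ℝ := fun _ _ => 0
    let zx : ℝ → ℝ → ℝ := fun _ _ => 0
    (∀ t x, pdt c t x - pdx pa t x
      = -(c t x) * pdt (Ra γ) (a t x) (b t x) - d t x * pdt (Rb γ) (a t x) (b t x)) ∧
    (∀ t x, -pdt a t x - pdx qa t x = -Ra γ (a t x) (b t x)) ∧
    (∀ t x, pdt d t x - pdx pb t x
      = -(c t x) * pdx (Ra γ) (a t x) (b t x) - d t x * pdx (Rb γ) (a t x) (b t x)) ∧
    (∀ t x, -pdt b t x - pdx qb t x = -Rb γ (a t x) (b t x)) ∧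
    (∀ t x, pdx a t x = -(qb t x)) ∧
    (∀ t x, pdx b t x = qa t x) ∧
    (∀ t x, pdt zt t x + pdx zx t x
      = 2⁻¹ * (-(c t x) * pdt a t x + a t x * pdt c t x
          - d t x * pdt b t x + b t x * pdt d t x)
        + pa t x * pdx a t x + pb t x * pdx b t x
        + qa t x * pdx c t x + qb t x * pdx d t x
        - (-(pa t x) * qb t x + pb t x * qa t x
            - c t x * Ra γ (a t x) (b t x) - d t x * Rb γ (a t x) (b t x))) := by
  intro c d pa pb qa qb zt zx
  refine ⟨?_, ?_, ?_, ?_, ?_, ?_, ?_⟩ <;> intro t x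
  · simp [c, d, pa, pdt, pdx]
  · have h := hsol1 t x
    simp only [qa, pdx, pdt] at *
    linarith
  · simp [c, d, pb, pdt, pdx]
  · have h := hsol2 t x
    have hq : deriv (fun y => qb t y) x = -(pdx (pdx a) t x) := by
      simp only [qb, pdx, deriv.fun_neg]
    simp only [pdx, pdt] at *
    linarith
  · simp [qb]
  · simp [qa]
  · simp [c, d, pa, pb, zt, zx, pdt, pdx]
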